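/- arXiv:2507.23494 — 2 statements merged into one kernel-verified Lean document; each statement's English description precedes it below -/
import Mathlib

section
/- Let 𝓛 : ℝ^d → ℝ be a continuous positive definite function with support contained in [−1/2, 1/2]^d. Define 𝓗 on the torus 𝕋^d = ℝ^d/ℤ^d by 𝓗(t mod ℤ^d) := 𝓛(t) for t ∈ [−1/2, 1/2)^d. Then 𝓗 is a positive definite function on 𝕋^d. -/
open Complex Finset Filter Topology

/-!
Choose representatives `t i ∈ [-1/2, 1/2)^d` of the points `x i` and `r i j ∈ [-1/2, 1/2)^d`
of `x i - x j`, so that `r i j = t i - t j + m i j` with `m i j ∈ ℤ^d`. By continuity `L` also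
vanishes on the boundary of the cube, hence for `k l ∈ ℤ^d` the value `L (t i + k - (t j + l))`
is `L (r i j)` if `k - l = m i j` and `0` otherwise. Positive definiteness of `L` at the points
`t i + k`, `k ∈ {0, …, N-1}^d`, with coefficients `c i` thus yields the torus quadratic form
with the weights `∏ a, (N - |m i j a|)`; dividing by `N^d` and letting `N → ∞` gives its
nonnegativity.
-/

theorem re_sum_nonneg_of_posDef {V : Type*} [AddGroup V] {L : V → ℝ}
    (hpd : ∀ (n : ℕ) (x : Fin n → V) (c : Fin n → ℂ),
      0 ≤ (∑ i, ∑ j, c i * (starRingEnd ℂ) (c j) * (L (x i - x j) : ℂ)).re)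
    {ι : Type*} (s : Finset ι) (x : ι → V) (c : ι → ℂ) :
    0 ≤ (∑ i ∈ s, ∑ j ∈ s, c i * (starRingEnd ℂ) (c j) * (L (x i - x j) : ℂ)).re := by
  let e := s.equivFin.symm
  simpa only [← s.sum_coe_sort, ← e.sum_comp] using
    hpd _ (fun k => x (e k)) (fun k => c (e k))

theorem abs_lt_of_ne_zero_of_support_subset_Icc {d : ℕ} {L : (Fin d → ℝ) → ℝ}
    (hcont : Continuous L) {b : ℝ}
    (hsupp : ∀ t : Fin d → ℝ, t ∉ Set.Icc (fun _ => -b) (fun _ => b) → L t = 0)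
    {t : Fin d → ℝ} (ht : L t ≠ 0) (a : Fin d) : |t a| < b := by
  have hsub : Function.support L ⊆ interior (Set.Icc (fun _ => -b) fun _ => b) :=
    interior_maximal (fun s hs => by_contra fun h => hs (hsupp s h))
      (isOpen_compl_singleton.preimage hcont)
  have ht' := hsub ht
  rw [← Set.pi_univ_Icc, interior_pi_set Set.finite_univ] at ht'
  simp only [interior_Icc] at ht'
  exact abs_lt.2 (ht' a (Set.mem_univ a))

theorem apply_add_intCast_eq_ite {d : ℕ} {L : (Fin d → ℝ) → ℝ}
    (hL : ∀ t, L t ≠ 0 → ∀ a, |t a| < 1 / 2) {r : Fin d → ℝ}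
    (hr : ∀ a, |r a| ≤ 1 / 2) (m : Fin d → ℤ) :
    L (r + fun a => (m a : ℝ)) = if m = 0 then L r else 0 := by
  split_ifs with hm
  · simp [hm, ← Pi.zero_def]
  obtain ⟨a, ha⟩ := Function.ne_iff.1 hm
  by_contra h
  have hlt : |r a + m a| < 1 / 2 := hL _ h a
  have hone : (1 : ℝ) ≤ |(m a : ℝ)| := by exact_mod_cast Int.one_le_abs ha
  have htri := abs_sub (r a + m a) (r a)
  rw [add_sub_cancel_left] at htri
  linarith [hr a]

theorem sum_sum_piFinset_ite_sub_eq {ι R : Type*} [Fintype ι] [DecidableEq ι] [CommSemiring R]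
    {G : Type*} [Sub G] [DecidableEq G] (S : Finset G) (m : ι → G) :
    ∑ k ∈ Fintype.piFinset (fun _ => S), ∑ l ∈ Fintype.piFinset (fun _ => S),
      (if k - l = m then (1 : R) else 0) =
    ∏ a, ∑ u ∈ S, ∑ v ∈ S, if u - v = m a then (1 : R) else 0 := by
  simp_rw [prod_univ_sum, Fintype.prod_boole, funext_iff, Pi.sub_apply]

noncomputable def pairCount (N : ℕ) (m : ℤ) : ℝ :=
  ∑ u ∈ Ico (0 : ℤ) N, ∑ v ∈ Ico (0 : ℤ) N, if u - v = m then 1 else 0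

theorem pairCount_eq (N : ℕ) (m : ℤ) : pairCount N m = ((N - |m|).toNat : ℝ) := by
  have hfilter :
      {u ∈ Ico (0 : ℤ) N | u - m ∈ Ico (0 : ℤ) N} = Ico (max 0 m) (min N (N + m)) := by
    ext u; simp only [mem_filter, mem_Ico, max_le_iff, lt_min_iff]; omega
  have hcount : min (N : ℤ) (N + m) - max 0 m = N - |m| := by
    rcases le_total 0 m with hm | hm
    · rw [abs_of_nonneg hm]; omega
    · rw [abs_of_nonpos hm]; omega
  have hsub : ∀ u v : ℤ, u - v = m ↔ u - m = v := fun u v => by omega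
  simp_rw [pairCount, hsub, sum_ite_eq, sum_boole, hfilter, Int.card_Ico, hcount]

theorem tendsto_pairCount_div (m : ℤ) :
    Tendsto (fun N : ℕ => pairCount N m / N) atTop (𝓝 1) := by
  have h : Tendsto (fun N : ℕ => 1 - (|m| : ℝ) / N) atTop (𝓝 1) := by
    simpa using tendsto_const_nhds.sub (tendsto_const_div_atTop_nhds_zero_nat (|m| : ℝ))
  refine h.congr' ?_
  filter_upwards [eventually_ge_atTop m.natAbs, eventually_gt_atTop 0] with N hmN hN
  have : |m| ≤ N := by rw [Int.abs_eq_natAbs]; exact_mod_cast hmN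
  have hcast : ((N - |m|).toNat : ℝ) = ((N - |m| : ℤ) : ℝ) := by
    exact_mod_cast Int.toNat_of_nonneg (by omega)
  rw [pairCount_eq, hcast]
  push_cast
  field_simp

theorem sum_sum_piFinset_apply_add_sub_add {d : ℕ} {L : (Fin d → ℝ) → ℝ}
    (hL : ∀ t, L t ≠ 0 → ∀ a, |t a| < 1 / 2) {t s r : Fin d → ℝ}
    (hr : ∀ a, |r a| ≤ 1 / 2) {m : Fin d → ℤ} (hm : r = t - s + fun a => (m a : ℝ))
    (N : ℕ) :
    ∑ k ∈ Fintype.piFinset (fun _ => Ico (0 : ℤ) N),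
      ∑ l ∈ Fintype.piFinset (fun _ => Ico (0 : ℤ) N),
        L ((t + fun a => (k a : ℝ)) - (s + fun a => (l a : ℝ))) =
    (∏ a, pairCount N (m a)) * L r := by
  have hshift : ∀ k l : Fin d → ℤ,
      L ((t + fun a => (k a : ℝ)) - (s + fun a => (l a : ℝ))) =
        (if k - l = m then 1 else 0) * L r := by
    intro k l
    have harg : (t + fun a => (k a : ℝ)) - (s + fun a => (l a : ℝ)) =
        r + fun a => ((k - l - m) a : ℝ) := by
      rw [hm]; ext a; simp only [Pi.add_apply, Pi.sub_apply]; push_cast; ring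
    rw [harg, apply_add_intCast_eq_ite hL hr]
    simp [sub_eq_zero]
  simp_rw [hshift, ← sum_mul]
  rw [sum_sum_piFinset_ite_sub_eq]
  rfl

theorem re_sum_nonneg_of_eq_sub_add_intCast {d n : ℕ} {L : (Fin d → ℝ) → ℝ}
    (hpd : ∀ (n : ℕ) (x : Fin n → (Fin d → ℝ)) (c : Fin n → ℂ),
      0 ≤ (∑ i, ∑ j, c i * (starRingEnd ℂ) (c j) * (L (x i - x j) : ℂ)).re)
    (hL : ∀ t, L t ≠ 0 → ∀ a, |t a| < 1 / 2) (t : Fin n → Fin d → ℝ)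
    (r : Fin n → Fin n → Fin d → ℝ) (hr : ∀ i j a, |r i j a| ≤ 1 / 2)
    (m : Fin n → Fin n → Fin d → ℤ)
    (hm : ∀ i j, r i j = t i - t j + fun a => (m i j a : ℝ))
    (c : Fin n → ℂ) :
    0 ≤ (∑ i, ∑ j, c i * (starRingEnd ℂ) (c j) * (L (r i j) : ℂ)).re := by
  let w (N : ℕ) (i j : Fin n) : ℝ := (∏ a, pairCount N (m i j a)) / N ^ d
  let Q (N : ℕ) : ℂ :=
    ∑ i, ∑ j, c i * (starRingEnd ℂ) (c j) * (L (r i j) : ℂ) * (w N i j : ℂ)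
  have hQ : ∀ N, 0 ≤ (Q N).re := by
    intro N
    have h := re_sum_nonneg_of_posDef hpd (univ ×ˢ Fintype.piFinset fun _ => Ico (0 : ℤ) N)
      (fun p => t p.1 + fun a => (p.2 a : ℝ)) (fun p => c p.1)
    simp only [sum_product] at h
    rw [sum_congr rfl fun i _ => sum_comm] at h
    have hpair := fun i j => sum_sum_piFinset_apply_add_sub_add hL (hr i j) (hm i j) N
    simp only [mul_assoc, ← mul_sum, ← ofReal_sum, hpair] at h
    have h' := div_nonneg h (by positivity : (0 : ℝ) ≤ N ^ d)
    rw [← div_ofReal_re] at h'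
    refine h'.trans_eq (congrArg re ?_)
    simp only [Q, w, sum_div, mul_sum]
    refine sum_congr rfl fun i _ => sum_congr rfl fun j _ => ?_
    push_cast
    ring
  have hw : ∀ i j, Tendsto (fun N => w N i j) atTop (𝓝 1) := fun i j => by
    simpa [w, prod_div_distrib] using
      tendsto_finsetProd univ fun a _ => tendsto_pairCount_div (m i j a)
  have hQlim : Tendsto Q atTop
      (𝓝 (∑ i, ∑ j, c i * (starRingEnd ℂ) (c j) * (L (r i j) : ℂ))) := by
    simpa using tendsto_finsetSum _ fun i _ => tendsto_finsetSum _ fun j _ =>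
      ((continuous_ofReal.tendsto 1).comp (hw i j)).const_mul
        (c i * (starRingEnd ℂ) (c j) * L (r i j))
  exact ge_of_tendsto' ((continuous_re.tendsto _).comp hQlim) hQ

theorem exists_intCast_eq_add_of_coe_eq {s u : ℝ} (h : (s : AddCircle (1 : ℝ)) = u) :
    ∃ k : ℤ, s = u + k := by
  obtain ⟨k, hk⟩ := (AddCircle.coe_eq_zero_iff (p := (1 : ℝ))).1
    (by rw [AddCircle.coe_sub, h, sub_self] : ((s - u : ℝ) : AddCircle (1 : ℝ)) = 0)
  exact ⟨k, by simp only [zsmul_eq_mul, mul_one] at hk; linarith⟩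

/-- If `𝓛` is a continuous positive definite function on `ℝ^d` supported in
`[-1/2, 1/2]^d`, then its transplant `𝓗` to the torus `𝕋^d = ℝ^d/ℤ^d`
(defined by `𝓗(t mod ℤ^d) = 𝓛(t)` for `t ∈ [-1/2, 1/2)^d`) is positive definite. -/
theorem stmt3 (d : ℕ) (L : (Fin d → ℝ) → ℝ) (H : (Fin d → AddCircle (1 : ℝ)) → ℝ)
    (hcont : Continuous L)
    (hpd : ∀ (n : ℕ) (x : Fin n → (Fin d → ℝ)) (c : Fin n → ℂ),
      0 ≤ (∑ i, ∑ j, c i * (starRingEnd ℂ) (c j) * (L (x i - x j) : ℂ)).re)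
    (hsupp : ∀ t : Fin d → ℝ,
      t ∉ Set.Icc (fun _ => -(1 / 2 : ℝ)) (fun _ => (1 / 2 : ℝ)) → L t = 0)
    (hH : ∀ t : Fin d → ℝ, (∀ i, t i ∈ Set.Ico (-(1 / 2) : ℝ) (1 / 2)) →
      H (fun i => (t i : AddCircle (1 : ℝ))) = L t) :
    ∀ (n : ℕ) (x : Fin n → (Fin d → AddCircle (1 : ℝ))) (c : Fin n → ℂ),
      0 ≤ (∑ i, ∑ j, c i * (starRingEnd ℂ) (c j) * (H (x i - x j) : ℂ)).re := by
  intro n x c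
  have hrep : ∀ y : AddCircle (1 : ℝ),
      ∃ s ∈ Set.Ico (-(1 / 2) : ℝ) (1 / 2), (s : AddCircle (1 : ℝ)) = y := fun y => by
    have h := (AddCircle.equivIco 1 (-(1 / 2)) y).2
    exact ⟨_, ⟨h.1, h.2.trans_eq (by norm_num)⟩, AddCircle.coe_equivIco⟩
  choose rep rep_mem coe_rep using hrep
  have hHr : ∀ i j, H (x i - x j) = L fun a => rep ((x i - x j) a) := fun i j => by
    rw [← hH _ fun a => rep_mem _]
    simp_rw [coe_rep]
  have hm : ∀ i j a, ∃ k : ℤ, rep ((x i - x j) a) = rep (x i a) - rep (x j a) + k := by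
    intro i j a
    apply exists_intCast_eq_add_of_coe_eq
    rw [AddCircle.coe_sub, coe_rep, coe_rep, coe_rep, Pi.sub_apply]
  choose m hm using hm
  simp_rw [hHr]
  exact re_sum_nonneg_of_eq_sub_add_intCast hpd
    (fun _ => abs_lt_of_ne_zero_of_support_subset_Icc hcont hsupp)
    (fun i a => rep (x i a)) _ (fun i j a => abs_le.2 ⟨(rep_mem _).1, (rep_mem _).2.le⟩) m
    (fun i j => funext (hm i j)) c
end

section
/- Let (Y_k)_{k=0}^m be independent centered real random variables in L^p(ℙ) for some 1 < p ≤ 2. Then E[|∑_{k=0}^m Y_k|^p] ≤ C(p) ∑_{k=0}^m E[|Y_k|^p], where C(p) depends only on p. -/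
/-!
For `1 < p ≤ 2` the derivative `p * sign t * |t| ^ (p - 1)` of `|t| ^ p` is `(p - 1)`-Hölder
with constant `2p`, so the mean value theorem gives the pointwise bound
`|x + y| ^ p ≤ |x| ^ p + p * sign x * |x| ^ (p - 1) * y + 2p |y| ^ p`.
Taking `x` a partial sum and `y` an independent centered summand, the linear term has zero
expectation; induction over the summands gives the inequality with `C(p) = 2p`.
-/

open MeasureTheory ProbabilityTheory

namespace Real

theorem abs_rpow_sub_rpow_le {α a b : ℝ} (hα₀ : 0 ≤ α) (hα₁ : α ≤ 1) (ha : 0 ≤ a) (hb : 0 ≤ b) :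
    |a ^ α - b ^ α| ≤ |a - b| ^ α := by
  wlog hba : b ≤ a generalizing a b
  · rw [abs_sub_comm, abs_sub_comm a]
    exact this hb ha (le_of_not_ge hba)
  have hsub : a ^ α ≤ (a - b) ^ α + b ^ α := by
    simpa using rpow_add_le_add_rpow (sub_nonneg.2 hba) hb hα₀ hα₁
  rw [abs_of_nonneg (sub_nonneg.2 (rpow_le_rpow hb hba hα₀)), abs_of_nonneg (sub_nonneg.2 hba)]
  linarith

-- `sign t * |t| ^ α` for `α ≠ 0`, in the form of Mathlib's `hasDerivAt_abs_rpow`.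
noncomputable def signedRpow (α t : ℝ) : ℝ := |t| ^ (α - 1) * t

theorem signedRpow_neg (α t : ℝ) : signedRpow α (-t) = -signedRpow α t := by
  simp [signedRpow]

theorem signedRpow_of_nonneg {α t : ℝ} (hα : α ≠ 0) (ht : 0 ≤ t) : signedRpow α t = t ^ α := by
  rw [signedRpow, abs_of_nonneg ht, ← rpow_add_one' ht (by simpa using hα), sub_add_cancel]

theorem abs_signedRpow {α : ℝ} (hα : α ≠ 0) (t : ℝ) : |signedRpow α t| = |t| ^ α := by
  rw [← signedRpow_of_nonneg hα (abs_nonneg t), signedRpow, signedRpow, abs_mul, abs_abs,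
    abs_of_nonneg (rpow_nonneg (abs_nonneg t) _)]

theorem abs_signedRpow_sub_le {α : ℝ} (hα₀ : 0 < α) (hα₁ : α ≤ 1) (a b : ℝ) :
    |signedRpow α a - signedRpow α b| ≤ 2 * |a - b| ^ α := by
  wlog hb : 0 ≤ b generalizing a b
  · have := this (-a) (-b) (by linarith)
    rwa [signedRpow_neg, signedRpow_neg, neg_sub_neg, neg_sub_neg, abs_sub_comm,
      abs_sub_comm b] at this
  rcases le_total 0 a with ha | ha
  · rw [signedRpow_of_nonneg hα₀.ne' ha, signedRpow_of_nonneg hα₀.ne' hb]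
    have := rpow_nonneg (abs_nonneg (a - b)) α
    linarith [abs_rpow_sub_rpow_le hα₀.le hα₁ ha hb]
  · -- opposite signs: both `|a|` and `|b|` are at most `|a - b|`
    have hle : ∀ t, |t| ≤ |a - b| → |signedRpow α t| ≤ |a - b| ^ α := fun t ht => by
      rw [abs_signedRpow hα₀.ne']
      exact rpow_le_rpow (abs_nonneg t) ht hα₀.le
    calc |signedRpow α a - signedRpow α b|
        ≤ |signedRpow α a| + |signedRpow α b| := abs_sub _ _
      _ ≤ 2 * |a - b| ^ α := by
        linarith [hle a (by rw [abs_of_nonpos ha, abs_of_nonpos (by linarith)]; linarith),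
          hle b (by rw [abs_of_nonneg hb, abs_of_nonpos (by linarith)]; linarith)]

theorem hasDerivAt_abs_rpow_eq_signedRpow {p : ℝ} (hp : 1 < p) (x : ℝ) :
    HasDerivAt (fun t => |t| ^ p) (p * signedRpow (p - 1) x) x := by
  convert hasDerivAt_abs_rpow x hp using 1
  rw [signedRpow, mul_assoc]
  ring_nf

theorem abs_add_rpow_le {p : ℝ} (hp₁ : 1 < p) (hp₂ : p ≤ 2) (x y : ℝ) :
    |x + y| ^ p ≤ |x| ^ p + p * signedRpow (p - 1) x * y + 2 * p * |y| ^ p := by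
  set f : ℝ → ℝ := fun t => |t| ^ p - p * signedRpow (p - 1) x * t
  have hf : ∀ t, HasDerivAt f (p * signedRpow (p - 1) t - p * signedRpow (p - 1) x) t := fun t =>
    (hasDerivAt_abs_rpow_eq_signedRpow hp₁ t).sub (by simpa using (hasDerivAt_id t).const_mul _)
  have hbound : ∀ t ∈ Set.uIcc x (x + y),
      ‖p * signedRpow (p - 1) t - p * signedRpow (p - 1) x‖ ≤ 2 * p * |y| ^ (p - 1) := by
    intro t ht
    have htx : |t - x| ≤ |y| := by simpa using Set.abs_sub_left_of_mem_uIcc ht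
    rw [Real.norm_eq_abs, ← mul_sub, abs_mul, abs_of_pos (by linarith)]
    calc p * |signedRpow (p - 1) t - signedRpow (p - 1) x|
        ≤ p * (2 * |t - x| ^ (p - 1)) := by
          gcongr; exact abs_signedRpow_sub_le (by linarith) (by linarith) t x
      _ ≤ p * (2 * |y| ^ (p - 1)) := by gcongr
      _ = 2 * p * |y| ^ (p - 1) := by ring
  have hmvt := (convex_uIcc x (x + y)).norm_image_sub_le_of_norm_hasDerivWithin_le
    (fun t _ => (hf t).hasDerivWithinAt) hbound
    Set.left_mem_uIcc Set.right_mem_uIcc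
  have hy : |y| ^ (p - 1) * |y| = |y| ^ p := by
    rw [← rpow_add_one' (abs_nonneg y) (by linarith), sub_add_cancel]
  have key : f (x + y) - f x ≤ 2 * p * |y| ^ p :=
    calc f (x + y) - f x ≤ |f (x + y) - f x| := le_abs_self _
      _ ≤ 2 * p * |y| ^ (p - 1) * |x + y - x| := hmvt
      _ = 2 * p * |y| ^ p := by rw [add_sub_cancel_left, mul_assoc, hy]
  simp only [f] at key
  linarith

end Real

open Real

section

variable {Ω : Type*} {mΩ : MeasurableSpace Ω} {μ : Measure Ω} [IsFiniteMeasure μ] {p : ℝ}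

theorem MeasureTheory.MemLp.integrable_abs_rpow {X : Ω → ℝ} {q : ℝ} (hq : 0 ≤ q)
    (hX : MemLp X (ENNReal.ofReal q) μ) : Integrable (fun ω => |X ω| ^ q) μ := by
  simpa [ENNReal.toReal_ofReal hq] using hX.integrable_norm_rpow'

theorem integral_abs_add_rpow_le (hp₁ : 1 < p) (hp₂ : p ≤ 2) {X Z : Ω → ℝ}
    (hX : MemLp X (ENNReal.ofReal p) μ) (hZ : MemLp Z (ENNReal.ofReal p) μ)
    (hXZ : IndepFun X Z μ) (hZ₀ : ∫ ω, Z ω ∂μ = 0) :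
    ∫ ω, |X ω + Z ω| ^ p ∂μ ≤ ∫ ω, |X ω| ^ p ∂μ + 2 * p * ∫ ω, |Z ω| ^ p ∂μ := by
  set g : ℝ → ℝ := fun t => p * signedRpow (p - 1) t
  have hg : Measurable g := by unfold g signedRpow; fun_prop
  have hgX : Integrable (fun ω => g (X ω)) μ := by
    refine (((hX.mono_exponent (ENNReal.ofReal_le_ofReal (by linarith : p - 1 ≤ p))
      ).integrable_abs_rpow (by linarith)).const_mul p).mono'
      (hg.comp_aemeasurable hX.aemeasurable).aestronglyMeasurable (ae_of_all _ fun ω => ?_)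
    rw [Real.norm_eq_abs, abs_mul, abs_signedRpow (by linarith), abs_of_pos (by linarith)]
  have hZint : Integrable Z μ := hZ.integrable (by simpa using hp₁.le)
  have hindep : IndepFun (fun ω => g (X ω)) Z μ := hXZ.comp hg measurable_id
  have hcross : ∫ ω, g (X ω) * Z ω ∂μ = 0 := by
    rw [hindep.integral_fun_mul_eq_mul_integral hgX.aestronglyMeasurable
      hZint.aestronglyMeasurable]
    simp [hZ₀]
  have hXp := hX.integrable_abs_rpow (by linarith)
  have hZp := (hZ.integrable_abs_rpow (by linarith)).const_mul (2 * p)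
  have hcrossInt : Integrable (fun ω => g (X ω) * Z ω) μ := hindep.integrable_mul hgX hZint
  have hrest : Integrable (fun ω => g (X ω) * Z ω + 2 * p * |Z ω| ^ p) μ := hcrossInt.add hZp
  calc ∫ ω, |X ω + Z ω| ^ p ∂μ
      ≤ ∫ ω, |X ω| ^ p + (g (X ω) * Z ω + 2 * p * |Z ω| ^ p) ∂μ :=
        integral_mono ((hX.add hZ).integrable_abs_rpow (by linarith)) (hXp.add hrest)
          fun ω => by linarith [abs_add_rpow_le hp₁ hp₂ (X ω) (Z ω)]
    _ = ∫ ω, |X ω| ^ p ∂μ + 2 * p * ∫ ω, |Z ω| ^ p ∂μ := by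
        rw [integral_add hXp hrest, integral_add hcrossInt hZp, integral_const_mul,
          hcross, zero_add]

theorem integral_abs_finsetSum_rpow_le (hp₁ : 1 < p) (hp₂ : p ≤ 2) {ι : Type*} {Y : ι → Ω → ℝ}
    (hY : iIndepFun Y μ) (hLp : ∀ k, MemLp (Y k) (ENNReal.ofReal p) μ)
    (h₀ : ∀ k, ∫ ω, Y k ω ∂μ = 0) (s : Finset ι) :
    ∫ ω, |∑ k ∈ s, Y k ω| ^ p ∂μ ≤ 2 * p * ∑ k ∈ s, ∫ ω, |Y k ω| ^ p ∂μ := by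
  classical
  induction s using Finset.induction with
  | empty => simp [zero_rpow (by linarith : p ≠ 0)]
  | insert a s ha ih =>
    have hindep : IndepFun (fun ω => ∑ k ∈ s, Y k ω) (Y a) μ := by
      simpa [Finset.sum_fn] using
        hY.indepFun_finsetSum_of_notMem₀ (fun k => (hLp k).aemeasurable) ha
    have hLp_sum : MemLp (fun ω => ∑ k ∈ s, Y k ω) (ENNReal.ofReal p) μ :=
      memLp_finsetSum s fun k _ => hLp k
    have hstep := integral_abs_add_rpow_le hp₁ hp₂ hLp_sum (hLp a) hindep (h₀ a)
    simp only [Finset.sum_insert ha, add_comm (Y a _), mul_add]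
    linarith

/-- Scalar martingale type-`p` inequality for sums of independent centered random
variables: for `1 < p ≤ 2` there is a constant `C(p)` such that
`E[|∑ Y_k|^p] ≤ C(p) ∑ E[|Y_k|^p]`. -/
theorem stmt5 (p : ℝ) (hp1 : 1 < p) (hp2 : p ≤ 2) :
    ∃ C : ℝ, 0 < C ∧
      ∀ (Ω : Type) (_ : MeasureSpace Ω) (_ : IsProbabilityMeasure (ℙ : Measure Ω))
        (m : ℕ) (Y : Fin (m + 1) → Ω → ℝ),
        iIndepFun Y ℙ →
        (∀ k, MemLp (Y k) (ENNReal.ofReal p) ℙ) →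
        (∀ k, ∫ ω, Y k ω = 0) →
        ∫ ω, |∑ k, Y k ω| ^ p ≤ C * ∑ k, ∫ ω, |Y k ω| ^ p :=
  ⟨2 * p, by positivity, fun _ _ _ _ _ hY hLp h₀ =>
    integral_abs_finsetSum_rpow_le hp1 hp2 hY hLp h₀ Finset.univ⟩
end
end
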